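/- There exist pairs (b₁,c₁), (b₂,c₂) ∈ ℂ² with b_i c_i ≠ 0 and 4b_i³ + 27 ≠ 0 such that no u ∈ ℂ* satisfies both u⁹ ∈ {((4/27)b₂³+1)/((4/27)b₁³+1), 1/((4/27)b₁³+1)} and u ∈ {±(b₂c₂(4b₁³+27))/(b₁c₁(4b₂³+27))}. Moreover, the set of such pairs is dense in ℂ² × ℂ². -/
import Mathlib

open Polynomial in
lemma finite_pow_eq (n : ℕ) (hn : 0 < n) (w : ℂ) : {x : ℂ | x ^ n = w}.Finite := by
  refine (Polynomial.finite_setOf_isRoot (Polynomial.X_pow_sub_C_ne_zero hn w)).subset ?_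
  intro x hx
  simp only [Set.mem_setOf_eq] at hx ⊢
  simp [Polynomial.IsRoot, sub_eq_zero, hx]

lemma finite_Kc {K : ℂ} (hK : K ≠ 0) (v : ℂ) : {c : ℂ | (K * c) ^ 9 = v}.Finite := by
  refine (finite_pow_eq 9 (by norm_num) (v / K ^ 9)).subset ?_
  intro c hc
  simp only [Set.mem_setOf_eq] at hc ⊢
  rw [mul_pow] at hc
  field_simp
  linear_combination hc

lemma exists_near (F : Set ℂ) (hF : F.Finite) (z : ℂ) {ε : ℝ} (hε : 0 < ε) :
    ∃ w : ℂ, dist w z < ε ∧ w ∉ F := by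
  have hball : (Metric.ball z ε).Infinite := by
    apply Set.infinite_of_injective_forall_mem
      (f := fun n : ℕ => z + ((ε / (n + 2) : ℝ) : ℂ))
    case hi =>
      intro m n h
      simp only [add_right_inj, Complex.ofReal_inj] at h
      have hm : (0:ℝ) < m + 2 := by positivity
      have hn : (0:ℝ) < n + 2 := by positivity
      rw [div_eq_div_iff hm.ne' hn.ne'] at h
      have : (m : ℝ) = n := by
        have := mul_left_cancel₀ (ne_of_gt hε) (by linarith : ε * ((m:ℝ)+2) = ε * ((n:ℝ)+2))
        linarith
      exact_mod_cast this
    case _ =>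
      intro n
      simp only [Metric.mem_ball, dist_eq_norm, add_sub_cancel_left]
      rw [Complex.norm_real, Real.norm_eq_abs, abs_of_pos (by positivity)]
      rw [div_lt_iff₀ (by positivity)]
      nlinarith [Nat.cast_nonneg (α := ℝ) n]
  obtain ⟨w, hw⟩ := (hball.diff hF).nonempty
  exact ⟨w, by simpa [Metric.mem_ball] using hw.1, hw.2⟩

/-- finite set of bad `b`'s -/
lemma finite_badb : {z : ℂ | z = 0 ∨ 4 * z ^ 3 + 27 = 0}.Finite := by
  refine ((Set.finite_singleton (0:ℂ)).union (finite_pow_eq 3 (by norm_num) (-27/4))).subset ?_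
  intro z hz
  rcases hz with h | h
  · exact Or.inl h
  · right
    simp only [Set.mem_setOf_eq]
    linear_combination h / 4

/-- There are pairs `(b₁,c₁), (b₂,c₂)` with `bᵢcᵢ ≠ 0`, `4bᵢ³+27 ≠ 0`, for which no
`u ∈ ℂ*` satisfies the two membership conditions; moreover the set of such pairs
is dense in `ℂ² × ℂ²`. -/
theorem stmt7 :
    (∃ b₁ c₁ b₂ c₂ : ℂ, b₁ * c₁ ≠ 0 ∧ b₂ * c₂ ≠ 0 ∧
        4 * b₁ ^ 3 + 27 ≠ 0 ∧ 4 * b₂ ^ 3 + 27 ≠ 0 ∧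
        ¬ ∃ u : ℂ, u ≠ 0 ∧
          (u ^ 9 = (4 / 27 * b₂ ^ 3 + 1) / (4 / 27 * b₁ ^ 3 + 1) ∨
            u ^ 9 = 1 / (4 / 27 * b₁ ^ 3 + 1)) ∧
          (u = b₂ * c₂ * (4 * b₁ ^ 3 + 27) / (b₁ * c₁ * (4 * b₂ ^ 3 + 27)) ∨
            u = -(b₂ * c₂ * (4 * b₁ ^ 3 + 27) / (b₁ * c₁ * (4 * b₂ ^ 3 + 27))))) ∧
    Dense {p : (ℂ × ℂ) × (ℂ × ℂ) |
        p.1.1 * p.1.2 ≠ 0 ∧ p.2.1 * p.2.2 ≠ 0 ∧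
        4 * p.1.1 ^ 3 + 27 ≠ 0 ∧ 4 * p.2.1 ^ 3 + 27 ≠ 0 ∧
        ¬ ∃ u : ℂ, u ≠ 0 ∧
          (u ^ 9 = (4 / 27 * p.2.1 ^ 3 + 1) / (4 / 27 * p.1.1 ^ 3 + 1) ∨
            u ^ 9 = 1 / (4 / 27 * p.1.1 ^ 3 + 1)) ∧
          (u = p.2.1 * p.2.2 * (4 * p.1.1 ^ 3 + 27) /
              (p.1.1 * p.1.2 * (4 * p.2.1 ^ 3 + 27)) ∨
            u = -(p.2.1 * p.2.2 * (4 * p.1.1 ^ 3 + 27) /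
              (p.1.1 * p.1.2 * (4 * p.2.1 ^ 3 + 27))))} := by
  constructor
  · refine ⟨1, 1, 1, 2, by norm_num, by norm_num, by norm_num, by norm_num, ?_⟩
    rintro ⟨u, hu, h9, h | h⟩ <;> subst h <;> rcases h9 with h | h <;> norm_num at h
  · rw [Metric.dense_iff]
    intro x ε hε
    obtain ⟨b₁, hb₁d, hb₁⟩ := exists_near _ finite_badb x.1.1 hε
    simp only [Set.mem_setOf_eq, not_or] at hb₁
    obtain ⟨hb₁0, hb₁4⟩ := hb₁
    obtain ⟨c₁, hc₁d, hc₁⟩ := exists_near {0} (Set.finite_singleton 0) x.1.2 hε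
    rw [Set.mem_singleton_iff] at hc₁
    obtain ⟨b₂, hb₂d, hb₂⟩ := exists_near _ finite_badb x.2.1 hε
    simp only [Set.mem_setOf_eq, not_or] at hb₂
    obtain ⟨hb₂0, hb₂4⟩ := hb₂
    set A : ℂ := (4 / 27 * b₂ ^ 3 + 1) / (4 / 27 * b₁ ^ 3 + 1) with hA
    set B : ℂ := 1 / (4 / 27 * b₁ ^ 3 + 1) with hB
    set K : ℂ := b₂ * (4 * b₁ ^ 3 + 27) / (b₁ * c₁ * (4 * b₂ ^ 3 + 27)) with hKdef
    have hK : K ≠ 0 :=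
      div_ne_zero (mul_ne_zero hb₂0 hb₁4)
        (mul_ne_zero (mul_ne_zero hb₁0 hc₁) hb₂4)
    have hT : ({c : ℂ | c = 0 ∨ (K * c) ^ 9 = A ∨ (K * c) ^ 9 = -A ∨
        (K * c) ^ 9 = B ∨ (K * c) ^ 9 = -B}).Finite := by
      refine Set.Finite.subset ((Set.finite_singleton (0:ℂ)).union ((finite_Kc hK A).union
        ((finite_Kc hK (-A)).union ((finite_Kc hK B).union (finite_Kc hK (-B)))))) ?_
      intro c hc
      simp only [Set.mem_setOf_eq, Set.mem_union, Set.mem_singleton_iff] at hc ⊢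
      tauto
    obtain ⟨c₂, hc₂d, hc₂⟩ := exists_near _ hT x.2.2 hε
    simp only [Set.mem_setOf_eq, not_or] at hc₂
    obtain ⟨hc₂0, hn1, hn2, hn3, hn4⟩ := hc₂
    refine ⟨((b₁, c₁), (b₂, c₂)), ?_, ?_⟩
    · simp only [Metric.mem_ball, Prod.dist_eq, max_lt_iff]
      exact ⟨⟨hb₁d, hc₁d⟩, hb₂d, hc₂d⟩
    · refine ⟨mul_ne_zero hb₁0 hc₁, mul_ne_zero hb₂0 hc₂0, hb₁4, hb₂4, ?_⟩
      rintro ⟨u, hu, h9, hq⟩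
      have hr : b₂ * c₂ * (4 * b₁ ^ 3 + 27) / (b₁ * c₁ * (4 * b₂ ^ 3 + 27)) = K * c₂ := by
        rw [hKdef]; ring
      simp only [hr] at hq
      rcases hq with h | h <;> subst h <;> rcases h9 with h | h
      · exact hn1 h
      · exact hn3 h
      · exact hn2 (by linear_combination -h)
      · exact hn4 (by linear_combination -h)
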